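/- Let C ⊆ 𝐒 be balanced, and assume that for some N > 0 the element N − x_1² − ⋯ − x_n² of ℝ⟨x⟩ is a conic combination of elements of C ∩ ℝ⟨x⟩_2 and hermitian squares pp⋆ with p ∈ ℝ⟨x⟩_1. Let a ∈ 𝒮_{2d} and suppose a_{min,d} = sup{m ∈ ℝ : a − m ∈ M(C)_d} is finite. Then there exists L ∈ (M(C)_d)^∨ with L(1) = 1 and L(a) = a_{min,d}; consequently inf{L(a) : L ∈ (M(C)_d)^∨, L(1) = 1} = a_{min,d}, i.e., strong duality holds. -/

import Mathlib

open scoped BigOperators Matrix Kronecker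

namespace StatePoly

/-! ### Words and symmetrized words -/

/-- Words in the letters `x_1, …, x_n`: the free monoid on `Fin n`. -/
abbrev Word (n : ℕ) := FreeMonoid (Fin n)

/-- The word reversal (the involution `⋆` on words). -/
def wordRev {n : ℕ} (w : Word n) : Word n := FreeMonoid.reverse w

/-- Two nonempty words are identified iff they are equal or reverses of each other;
this realizes the relation `ς(w) = ς(w⋆)`. -/
def wordSetoid (n : ℕ) : Setoid {l : List (Fin n) // l ≠ []} where
  r u v := u.1 = v.1 ∨ u.1 = v.1.reverse
  iseqv := by
    constructor
    · intro u; exact Or.inl rfl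
    · rintro u v (h | h)
      · exact Or.inl h.symm
      · right; rw [h, List.reverse_reverse]
    · rintro u v w (h1 | h1) (h2 | h2)
      · exact Or.inl (h1.trans h2)
      · right; rw [h1, h2]
      · right; rw [h1, h2]
      · left; rw [h1, h2, List.reverse_reverse]

/-- Symbols `ς(w)`, `w` a nonempty word, modulo `ς(w) = ς(w⋆)`. -/
def SW (n : ℕ) := Quotient (wordSetoid n)

/-- The commutative algebra `𝒮` of state polynomials:
a polynomial ring in the symbols `ς(w)`. -/
abbrev SPoly (n : ℕ) := MvPolynomial (SW n) ℝ

/-- The algebra `𝐒 = 𝒮 ⊗ ℝ⟨x⟩` of nc state polynomials, realized as the monoid algebra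
of the free monoid over the polynomial ring `𝒮`. -/
abbrev NCSPoly (n : ℕ) := MonoidAlgebra (SPoly n) (Word n)

variable {n : ℕ}

/-- The state symbol `ς(w)` of a word, with `ς(1) = 1`. -/
noncomputable def sigWordL (l : List (Fin n)) : SPoly n :=
  if h : l = [] then 1 else MvPolynomial.X (Quotient.mk (wordSetoid n) ⟨l, h⟩)

/-- The unital `𝒮`-linear map `ς : 𝐒 → 𝒮`. -/
noncomputable def sig (f : NCSPoly n) : SPoly n :=
  Finsupp.sum f.coeff fun w c => c * sigWordL (FreeMonoid.toList w)

/-- The involution `⋆` on `𝐒`: it fixes `𝒮 ∪ {x_1, …, x_n}` pointwise and reverses words. -/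
noncomputable def ncStar (f : NCSPoly n) : NCSPoly n :=
  MonoidAlgebra.ofCoeff (Finsupp.mapDomain wordRev f.coeff)

/-- The embedding `𝒮 ⊆ 𝐒`. -/
noncomputable def iotaS (p : SPoly n) : NCSPoly n := MonoidAlgebra.single 1 p

/-- The variable `x_i` as an nc state polynomial. -/
noncomputable def ncX (i : Fin n) : NCSPoly n := MonoidAlgebra.single (FreeMonoid.of i) 1

/-- A real constant as an nc state polynomial. -/
noncomputable def ncConst (r : ℝ) : NCSPoly n := iotaS (MvPolynomial.C r)

/-- `f ∈ 𝐒` lies in the free algebra `ℝ⟨x⟩ ⊆ 𝐒` iff all its coefficients are real constants. -/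
def IsFreePoly (f : NCSPoly n) : Prop := ∀ w : Word n, ∃ r : ℝ, f.coeff w = MvPolynomial.C r

/-! ### Degrees -/

/-- `|w|` on symmetrized words. -/
def swDeg : SW n → ℕ :=
  Quotient.lift (fun l : {l : List (Fin n) // l ≠ []} => l.1.length)
    (by rintro u v (h | h) <;> simp [h])

/-- The degree of a monomial `∏ ς(u_j)^{e_j}`, namely `∑ e_j |u_j|`. -/
def monoWeight (m : SW n →₀ ℕ) : ℕ := m.sum fun q e => e * swDeg q

/-- The degree of a state polynomial. -/
noncomputable def sDeg (p : SPoly n) : ℕ := p.support.sup monoWeight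

/-- The degree of an nc state polynomial: the maximum over the `𝐒`-words appearing in it of
`deg ς(u_1)⋯ς(u_m)v = |v| + ∑_j |u_j|`. -/
noncomputable def ncDeg (f : NCSPoly n) : ℕ :=
  (Finsupp.support f.coeff).sup fun w => sDeg (f.coeff w) + (FreeMonoid.toList w).length

lemma sDeg_zero : sDeg (0 : SPoly n) = 0 := by
  simp [sDeg, MvPolynomial.support_zero]

lemma sDeg_add_le (p q : SPoly n) : sDeg (p + q) ≤ max (sDeg p) (sDeg q) := by
  classical
  refine Finset.sup_le fun m hm => ?_
  rcases Finset.mem_union.mp (MvPolynomial.support_add hm) with h | h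
  · exact le_max_of_le_left (Finset.le_sup h)
  · exact le_max_of_le_right (Finset.le_sup h)

lemma sDeg_smul_le (c : ℝ) (p : SPoly n) : sDeg (c • p) ≤ sDeg p :=
  Finset.sup_le fun _m hm => Finset.le_sup (MvPolynomial.support_smul hm)

lemma sDeg_one : sDeg (1 : SPoly n) = 0 := by
  classical
  refine le_antisymm (Finset.sup_le fun m hm => ?_) (Nat.zero_le _)
  have : m = 0 := by
    by_contra h
    have := MvPolynomial.mem_support_iff.mp hm
    rw [MvPolynomial.coeff_one, if_neg (fun he => h he.symm)] at this
    exact this rfl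
  subst this
  simp [monoWeight]

/-- The subspace `𝒮_{k}` of state polynomials of degree at most `k`. -/
noncomputable def SPolyLe (n k : ℕ) : Submodule ℝ (SPoly n) where
  carrier := {p | sDeg p ≤ k}
  add_mem' := fun {p q} hp hq =>
    le_trans (sDeg_add_le p q) (max_le hp hq)
  zero_mem' := by simp [Set.mem_setOf_eq, sDeg_zero]
  smul_mem' := fun c p hp => le_trans (sDeg_smul_le c p) hp

lemma one_mem_SPolyLe (k : ℕ) : (1 : SPoly n) ∈ SPolyLe n k := by
  show sDeg (1 : SPoly n) ≤ k
  simp [sDeg_one]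

/-- Extension by zero of a linear functional on `𝒮_{k}` to `𝒮`
(used to refer to values of truncated functionals). -/
noncomputable def lext {n k : ℕ} (L : SPolyLe n k →ₗ[ℝ] ℝ) (p : SPoly n) : ℝ :=
  if h : sDeg p ≤ k then L ⟨p, h⟩ else 0

/-! ### Evaluations -/

section Eval

variable {A : Type*} [Ring A] [Module ℝ A]

/-- Evaluation of a word at a tuple `X`. -/
noncomputable def wEvalL (X : Fin n → A) (l : List (Fin n)) : A := (l.map X).prod

/-- The value assigned to the symbol `ς(w)`: `λ(w(X))`. -/
noncomputable def stVal (lam : A → ℝ) (X : Fin n → A) (q : SW n) : ℝ :=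
  lam (wEvalL X (Quotient.out q).1)

/-- Evaluation `a(λ; X) ∈ ℝ` of a state polynomial. -/
noncomputable def sEval (lam : A → ℝ) (X : Fin n → A) (p : SPoly n) : ℝ :=
  MvPolynomial.eval (stVal lam X) p

/-- Evaluation `f(λ; X) ∈ A` of an nc state polynomial. -/
noncomputable def ncEval (lam : A → ℝ) (X : Fin n → A) (f : NCSPoly n) : A :=
  Finsupp.sum f.coeff fun w c => sEval lam X c • wEvalL X (FreeMonoid.toList w)

end Eval

/-! ### States on matrix algebras -/

/-- A density matrix: positive semidefinite with trace 1. -/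
def IsDensity {k : ℕ} (ρ : Matrix (Fin k) (Fin k) ℝ) : Prop :=
  ρ.PosSemidef ∧ ρ.trace = 1

/-- The state on `k×k` matrices induced by a density matrix. -/
noncomputable def matState {k : ℕ} (ρ : Matrix (Fin k) (Fin k) ℝ) :
    Matrix (Fin k) (Fin k) ℝ → ℝ := fun Y => (ρ * Y).trace

/-- The vector state on `k×k` matrices induced by a vector `ψ`. -/
noncomputable def vecStateM {k : ℕ} (ψ : Fin k → ℝ) :
    Matrix (Fin k) (Fin k) ℝ → ℝ := fun Y => ψ ⬝ᵥ Y.mulVec ψ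

/-! ### States on B(H) -/

section Op

variable (H : Type*) [NormedAddCommGroup H] [InnerProductSpace ℝ H] [CompleteSpace H]

/-- A state on `B(H)`: a unital positive `⋆`-linear functional. -/
def IsState (lam : (H →L[ℝ] H) →ₗ[ℝ] ℝ) : Prop :=
  lam 1 = 1 ∧ (∀ Y : H →L[ℝ] H, lam (ContinuousLinearMap.adjoint Y) = lam Y) ∧
    ∀ Y : H →L[ℝ] H, 0 ≤ lam (Y * ContinuousLinearMap.adjoint Y)

/-- A vector state on `B(H)`. -/
def IsVecState (lam : (H →L[ℝ] H) →ₗ[ℝ] ℝ) : Prop :=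
  ∃ v : H, ‖v‖ = 1 ∧ ∀ Y : H →L[ℝ] H, lam Y = inner ℝ (Y v) v

/-- The state semialgebraic set `𝒟_C^∞` determined by the constraint set `C ⊆ 𝐒`. -/
def DCinf (C : Set (NCSPoly n)) :
    Set ((((H →L[ℝ] H) →ₗ[ℝ] ℝ)) × (Fin n → (H →L[ℝ] H))) :=
  {p | IsState H p.1 ∧ (∀ i, ContinuousLinearMap.adjoint (p.2 i) = p.2 i) ∧
    ∀ c ∈ C, (ncEval (⇑p.1) p.2 c).IsPositive}

/-- The subset `vec-𝒟_C^∞` of `𝒟_C^∞` in which the state is a vector state. -/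
def vecDCinf (C : Set (NCSPoly n)) :
    Set ((((H →L[ℝ] H) →ₗ[ℝ] ℝ)) × (Fin n → (H →L[ℝ] H))) :=
  {p ∈ DCinf H C | IsVecState H p.1}

end Op

/-! ### Positivity structures -/

/-- `Ω`: sums of products of elements `ς(h h⋆)`, `h ∈ 𝐒`. -/
def Omega (n : ℕ) : Set (SPoly n) :=
  {x | ∃ (m : ℕ) (g : Fin m → SPoly n),
    (∀ i, ∃ (mi : ℕ) (h : Fin mi → NCSPoly n), g i = ∏ j, sig (h j * ncStar (h j))) ∧
    x = ∑ i, g i}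

/-- Membership in the smallest subset of `𝒮` containing `{1} ∪ S` that is closed under
addition and under multiplication by squares of elements of `A`. -/
inductive QMemIn (A S : Set (SPoly n)) : SPoly n → Prop
  | base {s : SPoly n} : s ∈ insert (1 : SPoly n) S → QMemIn A S s
  | add {p q : SPoly n} : QMemIn A S p → QMemIn A S q → QMemIn A S (p + q)
  | mul_sq {a p : SPoly n} : a ∈ A → QMemIn A S p → QMemIn A S (a ^ 2 * p)

/-- The quadratic module generated by `S` in `𝒮`. -/
def QM (S : Set (SPoly n)) : Set (SPoly n) := {x | QMemIn Set.univ S x}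

/-- The set `C^ς = {ς(p c p⋆) : p ∈ ℝ⟨x⟩, c ∈ {1} ∪ C}`. -/
def Csig (C : Set (NCSPoly n)) : Set (SPoly n) :=
  {x | ∃ p : NCSPoly n, IsFreePoly p ∧ ∃ c ∈ insert (1 : NCSPoly n) C,
    x = sig (p * c * ncStar p)}

/-- A balanced constraint set: closed under `⋆`, and non-symmetric elements come in `±` pairs. -/
def Balanced (C : Set (NCSPoly n)) : Prop :=
  (∀ c ∈ C, ncStar c ∈ C) ∧ ∀ c ∈ C, c ≠ ncStar c → -c ∈ C

/-- An algebraically bounded constraint set: `N - x_1^2 - ⋯ - x_n^2 = ∑ p_i c_i p_i⋆` with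
`c_i ∈ {1} ∪ C ∩ ℝ⟨x⟩` and `p_i ∈ ℝ⟨x⟩`. -/
def AlgBounded (C : Set (NCSPoly n)) : Prop :=
  ∃ N : ℝ, 0 < N ∧ ∃ (m : ℕ) (p c : Fin m → NCSPoly n),
    (∀ i, IsFreePoly (p i)) ∧
    (∀ i, c i = 1 ∨ (c i ∈ C ∧ IsFreePoly (c i))) ∧
    ncConst N - ∑ j : Fin n, ncX j ^ 2 = ∑ i, p i * c i * ncStar (p i)

/-- The truncated quadratic module `M(C)_d`. -/
def MCd (C : Set (NCSPoly n)) (d : ℕ) : Set (SPoly n) :=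
  {x | ∃ (K : ℕ) (f c : Fin K → NCSPoly n),
    (∀ i, c i ∈ insert (1 : NCSPoly n) C) ∧
    (∀ i, ncDeg (f i * c i * ncStar (f i)) ≤ 2 * d) ∧
    x = ∑ i, sig (f i * c i * ncStar (f i))}

end StatePoly

namespace StatePoly

/-- Membership of a truncated linear functional `L : 𝒮_{2d} → ℝ` in the dual cone
`(M(C)_d)^∨`: `L(ς(f c f⋆)) ≥ 0` for all `c ∈ {1} ∪ C` and `f ∈ 𝐒` with
`deg(f c f⋆) ≤ 2d` (values of `L` referred to via the extension-by-zero `lext`). -/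
def InDualCone {n : ℕ} (d : ℕ) (C : Set (NCSPoly n))
    (L : SPolyLe n (2 * d) →ₗ[ℝ] ℝ) : Prop :=
  ∀ f c : NCSPoly n, c ∈ insert (1 : NCSPoly n) C →
    ncDeg (f * c * ncStar f) ≤ 2 * d → 0 ≤ lext L (sig (f * c * ncStar f))

/-- The strengthened boundedness hypothesis: for some `N > 0`, the element
`N − x₁² − ⋯ − xₙ²` is a conic combination of elements of `C ∩ ℝ⟨x⟩_2` and hermitian
squares `pp⋆` with `p ∈ ℝ⟨x⟩_1`. -/
def StrongBounded {n : ℕ} (C : Set (NCSPoly n)) : Prop :=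
  ∃ N : ℝ, 0 < N ∧ ∃ (m : ℕ) (t : Fin m → ℝ) (g : Fin m → NCSPoly n),
    (∀ i, 0 ≤ t i) ∧
    (∀ i, (g i ∈ C ∧ IsFreePoly (g i) ∧ ncDeg (g i) ≤ 2) ∨
      (∃ p : NCSPoly n, IsFreePoly p ∧ ncDeg p ≤ 1 ∧ g i = p * ncStar p)) ∧
    ncConst N - ∑ j : Fin n, ncX j ^ 2 = ∑ i, ncConst (t i) * g i

end StatePoly

/-!
Strong duality comes from the Riesz extension theorem, applied in `𝒮_{2d}` to the cone
`M(C)_d` enlarged by the ray through `a_{min,d} - a`. The functional `t · 1 ↦ t` is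
nonnegative on the enlarged cone precisely because `a_{min,d}` is the supremum and `M(C)_d`
contains no negative constant (otherwise the supremum would be infinite); its extension `L`
then satisfies `L(a) ≤ a_{min,d}`, while `L(a) ≥ a_{min,d}` holds for every unital `L ≥ 0`.

Riesz' theorem needs `1` to be an order unit of `M(C)_d` in `𝒮_{2d}`. Multiplying
`N - ∑ xⱼ² = ∑ tᵢ gᵢ` by `h` and `h⋆` gives `ς(h xⱼ xⱼ h⋆) ≤ N ς(h h⋆)` whenever
`deg h < d`; iterating, `ς(ρ v v⋆ ρ) ≤ N^k` for `ρ` a product of state symbols and `v` a word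
of total degree `k ≤ d`. A monomial of degree `≤ 2d` splits as `ς(h₁ h₂⋆)` with `h₁, h₂` of
this form, and `±2 ς(h₁ h₂⋆) ≤ ς(h₁ h₁⋆) + ς(h₂ h₂⋆)` bounds it.
-/

namespace PointedCone

/-! ### Order-bounded elements and strong duality for pointed cones -/

variable {E : Type*} [AddCommGroup E] [Module ℝ E]

def orderBounded (K : PointedCone ℝ E) (e : E) : Submodule ℝ E where
  carrier := {y | ∃ c : ℝ, c • e + y ∈ K ∧ c • e - y ∈ K}
  zero_mem' := ⟨0, by simp, by simp⟩
  add_mem' := by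
    rintro y z ⟨c, hc₁, hc₂⟩ ⟨c', hc₁', hc₂'⟩
    refine ⟨c + c', ?_, ?_⟩
    · convert K.add_mem hc₁ hc₁' using 1; module
    · convert K.add_mem hc₂ hc₂' using 1; module
  smul_mem' := by
    rintro r y ⟨c, hc₁, hc₂⟩
    refine ⟨|r| * c, ?_, ?_⟩ <;> rcases abs_cases r with ⟨hr, hr0⟩ | ⟨hr, hr0⟩ <;> rw [hr]
    · convert K.smul_mem hr0 hc₁ using 1; module
    · convert K.smul_mem (neg_nonneg.2 hr0.le) hc₂ using 1; module
    · convert K.smul_mem hr0 hc₂ using 1; module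
    · convert K.smul_mem (neg_nonneg.2 hr0.le) hc₁ using 1; module

variable {K : PointedCone ℝ E} {e a : E}

lemma nonempty_of_forall_exists_smul_add_mem (he : ∀ y, ∃ c : ℝ, c • e + y ∈ K) :
    {m : ℝ | a - m • e ∈ K}.Nonempty := by
  obtain ⟨c, hc⟩ := he a
  exact ⟨-c, by simpa [add_comm] using hc⟩

lemma sSup_le_of_forall_nonneg {g : E →ₗ[ℝ] ℝ} (hne : {m : ℝ | a - m • e ∈ K}.Nonempty)
    (hg : ∀ x ∈ K, 0 ≤ g x) (hge : g e = 1) : sSup {m : ℝ | a - m • e ∈ K} ≤ g a :=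
  csSup_le hne fun m hm => by simpa [hge] using hg _ hm

lemma nonneg_of_smul_mem (hne : {m : ℝ | a - m • e ∈ K}.Nonempty)
    (hbdd : BddAbove {m : ℝ | a - m • e ∈ K}) {t : ℝ} (ht : t • e ∈ K) : 0 ≤ t := by
  by_contra! ht0
  obtain ⟨m, hm⟩ := hne
  obtain ⟨B, hB⟩ := hbdd
  have hmB : m ≤ B := hB hm
  -- `a - (m + s |t|) e ∈ K` for all `s ≥ 0` contradicts boundedness
  set s := (B - m + 1) / -t
  have hs : 0 ≤ s := div_nonneg (by linarith) (by linarith)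
  have hmem : m - s * t ∈ {m : ℝ | a - m • e ∈ K} := by
    show a - (m - s * t) • e ∈ K
    convert K.add_mem hm (K.smul_mem hs ht) using 1; module
  have : s * t = -(B - m + 1) := by simp only [s]; field_simp [ht0.ne]
  linarith [hB hmem]

theorem exists_nonneg_eq_sSup (he : ∀ y, ∃ c : ℝ, c • e + y ∈ K)
    (hbdd : BddAbove {m : ℝ | a - m • e ∈ K}) :
    ∃ g : E →ₗ[ℝ] ℝ, (∀ x ∈ K, 0 ≤ g x) ∧ g e = 1 ∧ g a = sSup {m : ℝ | a - m • e ∈ K} := by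
  set S := {m : ℝ | a - m • e ∈ K}
  have hne : S.Nonempty := nonempty_of_forall_exists_smul_add_mem he
  have he0 : e ≠ 0 := by
    rintro rfl
    have := nonneg_of_smul_mem hne hbdd (t := -1) (by simp)
    norm_num at this
  set K' := K ⊔ hull ℝ ({sSup S • e - a} : Set E)
  set f : E →ₗ.[ℝ] ℝ := LinearPMap.mkSpanSingleton e 1 he0
  have hf : ∀ x : f.domain, (x : E) ∈ K' → 0 ≤ f x := by
    rintro ⟨x, hx⟩ hxK
    obtain ⟨t, rfl⟩ := Submodule.mem_span_singleton.1 hx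
    obtain ⟨k, hk, z, hz, hkz⟩ := Submodule.mem_sup.1 hxK
    obtain ⟨⟨s, hs⟩, rfl⟩ := Submodule.mem_span_singleton.1 hz
    rw [LinearPMap.mkSpanSingleton'_apply, RingHom.id_apply, smul_eq_mul, mul_one]
    change k + (⟨s, hs⟩ : {c : ℝ // 0 ≤ c}) • _ = t • e at hkz
    rw [Nonneg.mk_smul] at hkz
    rcases hs.eq_or_lt with rfl | hs
    · rw [zero_smul, add_zero] at hkz
      exact nonneg_of_smul_mem hne hbdd (hkz ▸ hk)
    · have hmem : sSup S - t / s ∈ S := by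
        show a - (sSup S - t / s) • e ∈ K
        have hk' : k = s • a + (t - s * sSup S) • e := by rw [eq_sub_of_add_eq hkz]; module
        convert K.smul_mem (inv_nonneg.2 hs.le) hk using 1
        rw [hk', smul_add, smul_smul, smul_smul, inv_mul_cancel₀ hs.ne', one_smul,
          sub_eq_add_neg, ← neg_smul]
        congr 2
        field_simp
        ring
      have hts : 0 ≤ t / s := by linarith [le_csSup hbdd hmem]
      rwa [le_div_iff₀ hs, zero_mul] at hts
  obtain ⟨g, hgf, hg⟩ := riesz_extension K' f hf fun y => by
    obtain ⟨c, hc⟩ := he y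
    exact ⟨⟨c • e, Submodule.smul_mem _ _ (Submodule.mem_span_singleton_self e)⟩,
      Submodule.mem_sup_left hc⟩
  have hge : g e = 1 := (hgf _).trans (LinearPMap.mkSpanSingleton_apply ℝ ℝ he0 1)
  refine ⟨g, fun x hx => hg x (Submodule.mem_sup_left hx), hge, le_antisymm ?_ ?_⟩
  · have := hg _ (Submodule.mem_sup_right (subset_hull (Set.mem_singleton _)))
    rwa [map_sub, map_smul, hge, smul_eq_mul, mul_one, sub_nonneg] at this
  · exact sSup_le_of_forall_nonneg hne (fun x hx => hg x (Submodule.mem_sup_left hx)) hge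

end PointedCone

namespace StatePoly

/-! ### State polynomials: `ς`, `⋆` and degrees -/

variable {n : ℕ}

lemma monoWeight_add (a b : SW n →₀ ℕ) : monoWeight (a + b) = monoWeight a + monoWeight b :=
  Finsupp.sum_add_index' (by simp) fun _ _ _ => add_mul _ _ _

lemma sDeg_mul_le (p q : SPoly n) : sDeg (p * q) ≤ sDeg p + sDeg q := by
  classical
  refine Finset.sup_le fun m hm => ?_
  obtain ⟨m₁, h₁, m₂, h₂, rfl⟩ := Finset.mem_add.1 (MvPolynomial.support_mul p q hm)
  rw [monoWeight_add]
  exact add_le_add (Finset.le_sup h₁) (Finset.le_sup h₂)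

lemma sDeg_sum_le {ι : Type*} {s : Finset ι} {F : ι → SPoly n} {D : ℕ}
    (h : ∀ i ∈ s, sDeg (F i) ≤ D) : sDeg (∑ i ∈ s, F i) ≤ D := by
  classical
  induction s using Finset.induction_on with
  | empty => simp [sDeg_zero]
  | insert a s ha ih =>
    rw [Finset.sum_insert ha]
    exact (sDeg_add_le _ _).trans (max_le (h a (by simp)) (ih fun i hi => h i (by simp [hi])))

lemma sigWordL_reverse (l : List (Fin n)) : sigWordL l.reverse = sigWordL l := by
  rcases eq_or_ne l [] with rfl | h
  · rfl
  · rw [sigWordL, sigWordL, dif_neg (by simpa using h), dif_neg h]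
    exact congrArg MvPolynomial.X (Quotient.sound (Or.inr rfl))

lemma sDeg_X (q : SW n) : sDeg (MvPolynomial.X q : SPoly n) = swDeg q := by
  classical
  rw [sDeg, MvPolynomial.support_X, Finset.sup_singleton, monoWeight,
    Finsupp.sum_single_index (by simp), one_mul]

lemma sDeg_sigWordL_le (l : List (Fin n)) : sDeg (sigWordL l) ≤ l.length := by
  rcases eq_or_ne l [] with rfl | h
  · simp [sigWordL, sDeg_one]
  · rw [sigWordL, dif_neg h]
    exact (sDeg_X _).le

lemma iotaS_mul (p : SPoly n) (f : NCSPoly n) : iotaS p * f = p • f :=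
  (Algebra.smul_def p f).symm

lemma mul_iotaS (p : SPoly n) (f : NCSPoly n) : f * iotaS p = p • f :=
  (Algebra.commutes p f).symm.trans (iotaS_mul p f)

lemma ncConst_mul (r : ℝ) (f : NCSPoly n) : ncConst r * f = r • f :=
  (iotaS_mul _ f).trans (algebraMap_smul (SPoly n) r f)

lemma sig_single (w : Word n) (p : SPoly n) :
    sig (MonoidAlgebra.single w p) = p * sigWordL (FreeMonoid.toList w) :=
  Finsupp.sum_single_index (zero_mul _)

lemma sig_add (f g : NCSPoly n) : sig (f + g) = sig f + sig g :=
  Finsupp.sum_add_index' (fun _ => zero_mul _) fun _ _ _ => add_mul _ _ _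

lemma sig_smul (p : SPoly n) (f : NCSPoly n) : sig (p • f) = p * sig f := by
  rw [sig, MonoidAlgebra.coeff_smul, Finsupp.sum_smul_index' fun _ => zero_mul _, sig,
    Finsupp.mul_sum]
  exact Finsupp.sum_congr fun _ _ => mul_assoc _ _ _

noncomputable def sigₗ : NCSPoly n →ₗ[SPoly n] SPoly n where
  toFun := sig
  map_add' := sig_add
  map_smul' := sig_smul

lemma sig_sub (f g : NCSPoly n) : sig (f - g) = sig f - sig g := map_sub sigₗ f g

lemma sig_sum {ι : Type*} (s : Finset ι) (F : ι → NCSPoly n) :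
    sig (∑ i ∈ s, F i) = ∑ i ∈ s, sig (F i) := map_sum sigₗ F s

lemma sig_real_smul (r : ℝ) (f : NCSPoly n) : sig (r • f) = r • sig f := by
  rw [← algebraMap_smul (SPoly n) r f, sig_smul, Algebra.smul_def]

lemma sig_iotaS (p : SPoly n) : sig (iotaS p) = p := by
  rw [iotaS, sig_single]
  exact mul_one p

lemma ncStar_single (w : Word n) (p : SPoly n) :
    ncStar (MonoidAlgebra.single w p) = MonoidAlgebra.single (wordRev w) p := by
  rw [ncStar, MonoidAlgebra.coeff_single, Finsupp.mapDomain_single]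
  rfl

lemma ncStar_add (f g : NCSPoly n) : ncStar (f + g) = ncStar f + ncStar g := by
  rw [ncStar, MonoidAlgebra.coeff_add, Finsupp.mapDomain_add]
  rfl

lemma ncStar_smul (p : SPoly n) (f : NCSPoly n) : ncStar (p • f) = p • ncStar f := by
  rw [ncStar, MonoidAlgebra.coeff_smul, Finsupp.mapDomain_smul]
  rfl

noncomputable def ncStarₗ : NCSPoly n →ₗ[SPoly n] NCSPoly n where
  toFun := ncStar
  map_add' := ncStar_add
  map_smul' := ncStar_smul

lemma ncStar_zero : ncStar (0 : NCSPoly n) = 0 := map_zero ncStarₗ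

lemma ncStar_sub (f g : NCSPoly n) : ncStar (f - g) = ncStar f - ncStar g := map_sub ncStarₗ f g

lemma ncStar_sum {ι : Type*} (s : Finset ι) (F : ι → NCSPoly n) :
    ncStar (∑ i ∈ s, F i) = ∑ i ∈ s, ncStar (F i) := map_sum ncStarₗ F s

lemma ncStar_real_smul (r : ℝ) (f : NCSPoly n) : ncStar (r • f) = r • ncStar f := by
  rw [← algebraMap_smul (SPoly n) r f, ← algebraMap_smul (SPoly n) r (ncStar f), ncStar_smul]

lemma ncStar_ncStar (f : NCSPoly n) : ncStar (ncStar f) = f := by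
  rw [ncStar, ncStar, MonoidAlgebra.coeff_ofCoeff, ← Finsupp.mapDomain_comp]
  have : wordRev ∘ wordRev = (id : Word n → Word n) := funext fun _ => FreeMonoid.reverse_reverse
  rw [this, Finsupp.mapDomain_id]

lemma ncStar_mul (f g : NCSPoly n) : ncStar (f * g) = ncStar g * ncStar f := by
  induction f using MonoidAlgebra.induction_linear with
  | zero => rw [zero_mul, ncStar_zero, mul_zero]
  | add f₁ f₂ h₁ h₂ => rw [add_mul, ncStar_add, h₁, h₂, ncStar_add, mul_add]
  | single w p =>
    induction g using MonoidAlgebra.induction_linear with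
    | zero => rw [mul_zero, ncStar_zero, zero_mul]
    | add g₁ g₂ h₁ h₂ => rw [mul_add, ncStar_add, h₁, h₂, ncStar_add, add_mul]
    | single v q =>
      simp only [MonoidAlgebra.single_mul_single, ncStar_single, wordRev, FreeMonoid.reverse_mul,
        mul_comm p q]

lemma ncStar_iotaS (p : SPoly n) : ncStar (iotaS p) = iotaS p := ncStar_single 1 p

lemma ncStar_ncX (j : Fin n) : ncStar (ncX j) = ncX j := ncStar_single _ 1

lemma sig_ncStar (f : NCSPoly n) : sig (ncStar f) = sig f := by
  induction f using MonoidAlgebra.induction_linear with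
  | zero => rw [ncStar_zero]
  | add f g hf hg => rw [ncStar_add, sig_add, sig_add, hf, hg]
  | single w p =>
    rw [ncStar_single, sig_single, sig_single]
    exact congrArg (p * ·) (sigWordL_reverse _)

lemma le_ncDeg {f : NCSPoly n} {w : Word n} (hw : w ∈ f.coeff.support) :
    sDeg (f.coeff w) + (FreeMonoid.toList w).length ≤ ncDeg f :=
  Finset.le_sup (f := fun w => sDeg (f.coeff w) + (FreeMonoid.toList w).length) hw

lemma ncDeg_single_le (w : Word n) (p : SPoly n) :
    ncDeg (MonoidAlgebra.single w p) ≤ sDeg p + (FreeMonoid.toList w).length := by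
  classical
  refine Finset.sup_le fun v hv => ?_
  obtain rfl := Finset.mem_singleton.1 (Finsupp.support_single_subset hv)
  rw [MonoidAlgebra.coeff_single, Finsupp.single_eq_same]

lemma ncDeg_iotaS_le (p : SPoly n) : ncDeg (iotaS p) ≤ sDeg p := ncDeg_single_le 1 p

lemma ncDeg_ncX_le (j : Fin n) : ncDeg (ncX j) ≤ 1 :=
  (ncDeg_single_le (FreeMonoid.of j) (1 : SPoly n)).trans (by simp [sDeg_one])

lemma ncDeg_add_le (f g : NCSPoly n) : ncDeg (f + g) ≤ max (ncDeg f) (ncDeg g) := by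
  classical
  refine Finset.sup_le fun w hw => ?_
  simp only [MonoidAlgebra.coeff_add, Finsupp.add_apply, Finsupp.mem_support_iff] at hw ⊢
  by_cases hf : f.coeff w = 0
  · rw [hf, zero_add] at hw ⊢
    exact le_max_of_le_right (le_ncDeg (Finsupp.mem_support_iff.2 hw))
  by_cases hg : g.coeff w = 0
  · rw [hg, add_zero]
    exact le_max_of_le_left (le_ncDeg (Finsupp.mem_support_iff.2 hf))
  refine (Nat.add_le_add_right (sDeg_add_le _ _) _).trans ?_
  rw [← Nat.add_max_add_right]
  exact max_le_max (le_ncDeg (Finsupp.mem_support_iff.2 hf))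
    (le_ncDeg (Finsupp.mem_support_iff.2 hg))

lemma ncDeg_real_smul_le (r : ℝ) (f : NCSPoly n) : ncDeg (r • f) ≤ ncDeg f := by
  refine Finset.sup_le fun w hw => ?_
  rw [MonoidAlgebra.coeff_smul_apply]
  exact (Nat.add_le_add_right (sDeg_smul_le r _) _).trans (le_ncDeg (Finsupp.support_smul hw))

lemma ncDeg_sub_le (f g : NCSPoly n) : ncDeg (f - g) ≤ max (ncDeg f) (ncDeg g) := by
  rw [sub_eq_add_neg, ← neg_one_smul ℝ g]
  exact (ncDeg_add_le _ _).trans (max_le_max le_rfl (ncDeg_real_smul_le _ _))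

lemma ncDeg_sum_le {ι : Type*} {s : Finset ι} {F : ι → NCSPoly n} {D : ℕ}
    (h : ∀ i ∈ s, ncDeg (F i) ≤ D) : ncDeg (∑ i ∈ s, F i) ≤ D := by
  classical
  induction s using Finset.induction_on with
  | empty => exact Nat.zero_le _
  | insert a s ha ih =>
    rw [Finset.sum_insert ha]
    exact (ncDeg_add_le _ _).trans (max_le (h a (by simp)) (ih fun i hi => h i (by simp [hi])))

lemma ncDeg_mul_le (f g : NCSPoly n) : ncDeg (f * g) ≤ ncDeg f + ncDeg g := by
  rw [MonoidAlgebra.mul_def]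
  refine ncDeg_sum_le fun v hv => ncDeg_sum_le fun w hw => (ncDeg_single_le _ _).trans ?_
  rw [FreeMonoid.toList_mul, List.length_append]
  have := add_le_add (le_ncDeg hv) (le_ncDeg hw)
  have := sDeg_mul_le (f.coeff v) (g.coeff w)
  omega

lemma ncDeg_ncStar_le (f : NCSPoly n) : ncDeg (ncStar f) ≤ ncDeg f := by
  conv_lhs => rw [← MonoidAlgebra.sum_coeff_single f]
  rw [Finsupp.sum, ncStar_sum]
  refine ncDeg_sum_le fun w hw => ?_
  calc ncDeg (ncStar (MonoidAlgebra.single w (f.coeff w)))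
      ≤ sDeg (f.coeff w) + (FreeMonoid.toList (wordRev w)).length := by
        rw [ncStar_single]; exact ncDeg_single_le _ _
    _ = sDeg (f.coeff w) + (FreeMonoid.toList w).length := by
        exact congrArg (sDeg (f.coeff w) + ·) List.length_reverse
    _ ≤ ncDeg f := le_ncDeg hw

lemma sDeg_sig_le (f : NCSPoly n) : sDeg (sig f) ≤ ncDeg f :=
  sDeg_sum_le fun _ hw =>
    ((sDeg_mul_le _ _).trans (Nat.add_le_add_left (sDeg_sigWordL_le _) _)).trans (le_ncDeg hw)

lemma mul_ncConst (r : ℝ) (f : NCSPoly n) : f * ncConst r = r • f :=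
  (mul_iotaS _ f).trans (algebraMap_smul (SPoly n) r f)

lemma sig_mul_iotaS (f : NCSPoly n) (p : SPoly n) : sig (f * iotaS p) = p * sig f := by
  rw [mul_iotaS, sig_smul]

lemma sig_iotaS_mul (p : SPoly n) (f : NCSPoly n) : sig (iotaS p * f) = p * sig f := by
  rw [iotaS_mul, sig_smul]

lemma sig_mul_ncStar_comm (f g : NCSPoly n) : sig (g * ncStar f) = sig (f * ncStar g) := by
  rw [← sig_ncStar (f * ncStar g), ncStar_mul, ncStar_ncStar]

lemma ncDeg_mul_mul_ncStar_le (f c : NCSPoly n) :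
    ncDeg (f * c * ncStar f) ≤ ncDeg f + ncDeg c + ncDeg f :=
  (ncDeg_mul_le _ _).trans (Nat.add_le_add (ncDeg_mul_le _ _) (ncDeg_ncStar_le f))

lemma ncDeg_one : ncDeg (1 : NCSPoly n) = 0 :=
  Nat.le_zero.1 ((ncDeg_iotaS_le 1).trans_eq sDeg_one)

/-! ### The truncated quadratic module -/

def truncQM (C : Set (NCSPoly n)) (d : ℕ) : PointedCone ℝ (SPoly n) where
  carrier := MCd C d
  zero_mem' := ⟨0, Fin.elim0, Fin.elim0, Fin.rec0, Fin.rec0, by simp⟩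
  add_mem' := by
    rintro _ _ ⟨K₁, f₁, c₁, hc₁, hd₁, rfl⟩ ⟨K₂, f₂, c₂, hc₂, hd₂, rfl⟩
    refine ⟨K₁ + K₂, Fin.append f₁ f₂, Fin.append c₁ c₂, Fin.addCases ?_ ?_,
      Fin.addCases ?_ ?_, by simp [Fin.sum_univ_add]⟩ <;> simpa
  smul_mem' := by
    rintro ⟨t, ht⟩ _ ⟨K, f, c, hc, hd, rfl⟩
    have key : ∀ i, (√t • f i) * c i * ncStar (√t • f i) = t • (f i * c i * ncStar (f i)) := by
      intro i
      rw [ncStar_real_smul, smul_mul_assoc, smul_mul_assoc, mul_smul_comm, smul_smul,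
        Real.mul_self_sqrt ht]
    refine ⟨K, fun i => √t • f i, c, hc, fun i => ?_, ?_⟩
    · exact (key i ▸ ncDeg_real_smul_le _ _).trans (hd i)
    · simp only [key, sig_real_smul, Nonneg.mk_smul, Finset.smul_sum]

variable {C : Set (NCSPoly n)} {d : ℕ}

lemma sig_mem_truncQM {f c : NCSPoly n} (hc : c ∈ insert 1 C)
    (hdeg : ncDeg (f * c * ncStar f) ≤ 2 * d) : sig (f * c * ncStar f) ∈ truncQM C d :=
  ⟨1, fun _ => f, fun _ => c, fun _ => hc, fun _ => hdeg, by simp⟩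

lemma sig_mul_ncStar_mem_truncQM {f : NCSPoly n} (hf : ncDeg f ≤ d) :
    sig (f * ncStar f) ∈ truncQM C d := by
  have h := ncDeg_mul_mul_ncStar_le f 1
  rw [ncDeg_one] at h
  simpa using sig_mem_truncQM (C := C) (Set.mem_insert 1 C) (h.trans (by omega))

/-- The `𝐒`-word `ρ · x_{v_1} ⋯ x_{v_k}`. -/
noncomputable def ncMonomial (v : List (Fin n)) (ρ : SPoly n) : NCSPoly n :=
  MonoidAlgebra.single (FreeMonoid.ofList v) ρ

lemma ncMonomial_mul_ncMonomial (v v' : List (Fin n)) (ρ ρ' : SPoly n) :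
    ncMonomial v ρ * ncMonomial v' ρ' = ncMonomial (v ++ v') (ρ * ρ') := by
  rw [ncMonomial, ncMonomial, ncMonomial, MonoidAlgebra.single_mul_single,
    FreeMonoid.ofList_append]

lemma ncStar_ncMonomial (v : List (Fin n)) (ρ : SPoly n) :
    ncStar (ncMonomial v ρ) = ncMonomial v.reverse ρ :=
  ncStar_single _ ρ

lemma sig_ncMonomial (v : List (Fin n)) (ρ : SPoly n) : sig (ncMonomial v ρ) = ρ * sigWordL v :=
  sig_single _ ρ

lemma ncDeg_ncMonomial_le (v : List (Fin n)) (ρ : SPoly n) :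
    ncDeg (ncMonomial v ρ) ≤ sDeg ρ + v.length :=
  ncDeg_single_le _ ρ

lemma ncMonomial_nil_one : ncMonomial [] (1 : SPoly n) = 1 := rfl

lemma ncMonomial_cons (j : Fin n) (v : List (Fin n)) :
    ncMonomial (j :: v) 1 = ncX j * ncMonomial v 1 := by
  rw [ncX, ncMonomial, ncMonomial, MonoidAlgebra.single_mul_single, one_mul]
  rfl

lemma iotaS_mul_ncMonomial (ρ : SPoly n) (v : List (Fin n)) :
    iotaS ρ * ncMonomial v 1 = ncMonomial v ρ := by
  rw [iotaS, ncMonomial, ncMonomial, MonoidAlgebra.single_mul_single, one_mul, mul_one]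

lemma sig_iotaS_mul_ncStar (ρ : SPoly n) : sig (iotaS ρ * ncStar (iotaS ρ)) = ρ ^ 2 := by
  rw [ncStar_iotaS, sig_iotaS_mul, sig_iotaS, sq]

lemma sDeg_prod_sigWordL_le (M : List (List (Fin n))) :
    sDeg (M.map sigWordL).prod ≤ (M.map List.length).sum := by
  induction M with
  | nil => simp [sDeg_one]
  | cons u M ih =>
    simp only [List.map_cons, List.prod_cons, List.sum_cons]
    exact (sDeg_mul_le _ _).trans (Nat.add_le_add (sDeg_sigWordL_le u) ih)

/-! ### Archimedean property of `M(C)_d` -/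

def SumSqBound (C : Set (NCSPoly n)) (d : ℕ) (N : ℝ) : Prop :=
  ∀ h : NCSPoly n, ncDeg h + 1 ≤ d →
    N • sig (h * ncStar h) - ∑ j, sig (h * ncX j * ncStar (h * ncX j)) ∈ truncQM C d

lemma StrongBounded.exists_sumSqBound (hC : StrongBounded C) :
    ∃ N : ℝ, 0 < N ∧ ∀ d, SumSqBound C d N := by
  obtain ⟨N, hN, m, t, g, ht, hg, hid⟩ := hC
  refine ⟨N, hN, fun d h hh => ?_⟩
  have hX : ∀ j, h * ncX j ^ 2 * ncStar h = h * ncX j * ncStar (h * ncX j) := fun j => by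
    rw [ncStar_mul, ncStar_ncX, sq]; noncomm_ring
  have hlhs : sig (h * (ncConst N - ∑ j, ncX j ^ 2) * ncStar h)
      = N • sig (h * ncStar h) - ∑ j, sig (h * ncX j * ncStar (h * ncX j)) := by
    rw [mul_sub, sub_mul, mul_ncConst, smul_mul_assoc, Finset.mul_sum, Finset.sum_mul, sig_sub,
      sig_real_smul, sig_sum]
    simp only [hX]
  rw [← hlhs, hid, Finset.mul_sum, Finset.sum_mul, sig_sum]
  refine Submodule.sum_mem _ fun i _ => ?_
  rw [ncConst_mul, mul_smul_comm, smul_mul_assoc, sig_real_smul]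
  refine (truncQM C d).smul_mem (ht i) ?_
  rcases hg i with ⟨hgC, -, hdeg⟩ | ⟨p, -, hp, hgp⟩
  · refine sig_mem_truncQM (Set.mem_insert_of_mem _ hgC) ?_
    have := ncDeg_mul_mul_ncStar_le h (g i)
    omega
  · rw [hgp, ← mul_assoc, mul_assoc (h * p), ← ncStar_mul]
    exact sig_mul_ncStar_mem_truncQM ((ncDeg_mul_le h p).trans (by omega))

variable {N : ℝ}

lemma SumSqBound.smul_sub_mem (hB : SumSqBound C d N) {h : NCSPoly n} (hh : ncDeg h + 1 ≤ d)
    (j : Fin n) :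
    N • sig (h * ncStar h) - sig (h * ncX j * ncStar (h * ncX j)) ∈ truncQM C d := by
  set s := fun k => sig (h * ncX k * ncStar (h * ncX k))
  have hsplit : N • sig (h * ncStar h) - s j
      = (N • sig (h * ncStar h) - ∑ k, s k) + ∑ k ∈ Finset.univ.erase j, s k := by
    rw [← Finset.add_sum_erase _ _ (Finset.mem_univ j)]
    abel
  rw [hsplit]
  refine add_mem (hB h hh) (Submodule.sum_mem _ fun k _ => ?_)
  exact sig_mul_ncStar_mem_truncQM ((ncDeg_mul_le _ _).trans (by have := ncDeg_ncX_le k; omega))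

lemma SumSqBound.pow_smul_sub_mem (hB : SumSqBound C d N) (hN : 0 ≤ N) :
    ∀ (v : List (Fin n)) (h : NCSPoly n), ncDeg h + v.length ≤ d →
      N ^ v.length • sig (h * ncStar h)
        - sig (h * ncMonomial v 1 * ncStar (h * ncMonomial v 1)) ∈ truncQM C d
  | [], h, _ => by
    rw [ncMonomial_nil_one, mul_one, List.length_nil, pow_zero, one_smul, sub_self]
    exact zero_mem _
  | j :: v, h, hdeg => by
    rw [List.length_cons] at hdeg
    have hhj : ncDeg (h * ncX j) + v.length ≤ d := by
      have := ncDeg_mul_le h (ncX j)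
      have := ncDeg_ncX_le j
      omega
    have := (truncQM C d).add_mem
      ((truncQM C d).smul_mem (pow_nonneg hN v.length) (hB.smul_sub_mem (h := h) (by omega) j))
      (hB.pow_smul_sub_mem hN v (h * ncX j) hhj)
    convert this using 1
    rw [ncMonomial_cons, ← mul_assoc, List.length_cons, pow_succ, mul_smul]
    module

lemma sig_mul_ncStar_sub_sq_mem {h : NCSPoly n} (hh : ncDeg h ≤ d) :
    sig (h * ncStar h) - sig h ^ 2 ∈ truncQM C d := by
  set G := h - iotaS (sig h)
  have hG : sig (G * ncStar G) = sig (h * ncStar h) - sig h ^ 2 := by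
    simp only [G, ncStar_sub, ncStar_iotaS, mul_sub, sub_mul, sig_sub, sig_mul_iotaS,
      sig_iotaS_mul, sig_ncStar, sig_iotaS]
    ring
  rw [← hG]
  refine sig_mul_ncStar_mem_truncQM ((ncDeg_sub_le _ _).trans (max_le hh ?_))
  exact (ncDeg_iotaS_le _).trans ((sDeg_sig_le h).trans hh)

lemma SumSqBound.pow_smul_one_sub_sig_mem (hB : SumSqBound C d N) (hN : 0 ≤ N) {ρ : SPoly n}
    {k : ℕ} (hρ : sDeg ρ ≤ k) (hρk : N ^ k • 1 - ρ ^ 2 ∈ truncQM C d) {v : List (Fin n)}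
    (hv : k + v.length ≤ d) :
    N ^ (k + v.length) • 1 - sig (ncMonomial v ρ * ncStar (ncMonomial v ρ)) ∈ truncQM C d := by
  have := add_mem ((truncQM C d).smul_mem (pow_nonneg hN v.length) hρk)
    (hB.pow_smul_sub_mem hN v (iotaS ρ) (by have := ncDeg_iotaS_le ρ; omega))
  rw [sig_iotaS_mul_ncStar, iotaS_mul_ncMonomial] at this
  convert this using 1
  rw [pow_add, mul_comm, mul_smul]
  module

lemma SumSqBound.pow_smul_one_sub_prod_sq_mem (hB : SumSqBound C d N) (hN : 0 ≤ N) :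
    ∀ M : List (List (Fin n)), (M.map List.length).sum ≤ d →
      N ^ (M.map List.length).sum • 1 - (M.map sigWordL).prod ^ 2 ∈ truncQM C d
  | [], _ => by simp
  | u :: M, hM => by
    simp only [List.map_cons, List.sum_cons] at hM ⊢
    have hρ := sDeg_prod_sigWordL_le M
    have := add_mem
      (hB.pow_smul_one_sub_sig_mem hN hρ (hB.pow_smul_one_sub_prod_sq_mem hN M (by omega))
        (v := u) (by omega))
      (sig_mul_ncStar_sub_sq_mem (C := C) (h := ncMonomial u (M.map sigWordL).prod)
        ((ncDeg_ncMonomial_le u _).trans (by omega)))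
    rw [sig_ncMonomial] at this
    convert this using 1
    rw [List.prod_cons, add_comm]
    ring

lemma sig_mul_ncStar_mem_orderBounded {h₁ h₂ : NCSPoly n} (hd₁ : ncDeg h₁ ≤ d)
    (hd₂ : ncDeg h₂ ≤ d) {c₁ c₂ : ℝ} (hc₁ : c₁ • 1 - sig (h₁ * ncStar h₁) ∈ truncQM C d)
    (hc₂ : c₂ • 1 - sig (h₂ * ncStar h₂) ∈ truncQM C d) :
    sig (h₁ * ncStar h₂) ∈ (truncQM C d).orderBounded 1 := by
  have hexpand : ∀ ε : ℝ, ε * ε = 1 → sig ((h₁ + ε • h₂) * ncStar (h₁ + ε • h₂))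
      = sig (h₁ * ncStar h₁) + sig (h₂ * ncStar h₂) + (2 * ε) • sig (h₁ * ncStar h₂) := by
    intro ε hε
    simp only [ncStar_add, ncStar_real_smul, add_mul, mul_add, smul_mul_assoc, mul_smul_comm,
      sig_add, sig_real_smul, sig_mul_ncStar_comm h₁ h₂]
    rw [smul_add, smul_smul, hε, one_smul]
    module
  have hmem : ∀ ε : ℝ, ε * ε = 1 →
      ((c₁ + c₂) / 2) • (1 : SPoly n) + ε • sig (h₁ * ncStar h₂) ∈ truncQM C d := by
    intro ε hε
    have hG : ncDeg (h₁ + ε • h₂) ≤ d :=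
      (ncDeg_add_le _ _).trans (max_le hd₁ ((ncDeg_real_smul_le _ _).trans hd₂))
    convert (truncQM C d).smul_mem (by norm_num : (0 : ℝ) ≤ 1 / 2)
      (add_mem (add_mem hc₁ hc₂) (sig_mul_ncStar_mem_truncQM hG)) using 1
    rw [hexpand ε hε]
    module
  exact ⟨(c₁ + c₂) / 2, by simpa using hmem 1 (by norm_num),
    by simpa [sub_eq_add_neg] using hmem (-1) (by norm_num)⟩

lemma exists_split_prod_sigWordL (d : ℕ) :
    ∀ (L : List (List (Fin n))) (b : ℕ), (L.map List.length).sum ≤ d + b →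
      ∃ (L₁ L₂ : List (List (Fin n))) (pre suf : List (Fin n)),
        (L₁.map List.length).sum + pre.length ≤ d ∧ (L₂.map List.length).sum + suf.length ≤ b ∧
        (L.map sigWordL).prod
          = (L₁.map sigWordL).prod * (L₂.map sigWordL).prod * sigWordL (pre ++ suf)
  | [], _, _ => ⟨[], [], [], [], by simp, by simp, by simp [sigWordL]⟩
  | w :: L, b, hle => by
    simp only [List.map_cons, List.sum_cons] at hle
    by_cases h₁ : w.length + (L.map List.length).sum ≤ d
    · exact ⟨w :: L, [], [], [], by simpa using h₁, by simp, by simp [sigWordL]⟩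
    by_cases h₂ : (L.map List.length).sum ≤ d
    · -- the word `w` straddles the two halves
      refine ⟨L, [], w.take (d - (L.map List.length).sum), w.drop (d - (L.map List.length).sum),
        by simp; omega, by simp; omega, ?_⟩
      simp only [List.take_append_drop, List.map_cons, List.prod_cons, List.map_nil,
        List.prod_nil, mul_one]
      ring
    · obtain ⟨L₁, L₂, pre, suf, hd, hb, hprod⟩ :=
        exists_split_prod_sigWordL d L (b - w.length) (by omega)
      refine ⟨L₁, w :: L₂, pre, suf, hd, by simp; omega, ?_⟩
      simp only [List.map_cons, List.prod_cons, hprod]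
      ring

lemma exists_prod_sigWordL_eq_monomial (mm : SW n →₀ ℕ) :
    ∃ L : List (List (Fin n)), (L.map List.length).sum = monoWeight mm ∧
      (L.map sigWordL).prod = MvPolynomial.monomial mm 1 := by
  classical
  have hX (q : SW n) : sigWordL (Quotient.out q).1 = MvPolynomial.X q := by
    rw [sigWordL, dif_neg (Quotient.out q).2]
    exact congrArg MvPolynomial.X (Quotient.out_eq q)
  have hlen (q : SW n) : (Quotient.out q).1.length = swDeg q := by
    conv_rhs => rw [← Quotient.out_eq q]
    rfl
  let word (q : SW n) := List.replicate (mm q) (Quotient.out q).1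
  have key (ls : List (SW n)) :
      ((ls.flatMap word).map List.length).sum = (ls.map fun q => mm q * swDeg q).sum ∧
        ((ls.flatMap word).map sigWordL).prod
          = (ls.map fun q => MvPolynomial.X q ^ mm q).prod := by
    induction ls with
    | nil => simp
    | cons q ls ih =>
      simp [word, List.flatMap_cons, ih, hlen, hX, List.map_replicate, List.sum_replicate,
        List.prod_replicate]
  obtain ⟨hsum, hprod⟩ := key mm.support.toList
  refine ⟨mm.support.toList.flatMap word, ?_, ?_⟩
  · rw [hsum, Finset.sum_map_toList]
    rfl
  · rw [hprod, Finset.prod_map_toList, MvPolynomial.monomial_eq, MvPolynomial.C_1, one_mul]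
    rfl

lemma SumSqBound.monomial_mem_orderBounded (hB : SumSqBound C d N) (hN : 0 ≤ N)
    {mm : SW n →₀ ℕ} (hmm : monoWeight mm ≤ 2 * d) :
    MvPolynomial.monomial mm 1 ∈ (truncQM C d).orderBounded 1 := by
  obtain ⟨L, hwt, hprod⟩ := exists_prod_sigWordL_eq_monomial mm
  obtain ⟨L₁, L₂, pre, suf, h₁, h₂, hsplit⟩ := exists_split_prod_sigWordL d L d (by omega)
  have hbound (M : List (List (Fin n))) (v : List (Fin n))
      (hv : (M.map List.length).sum + v.length ≤ d) :=
    hB.pow_smul_one_sub_sig_mem hN (sDeg_prod_sigWordL_le M)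
      (hB.pow_smul_one_sub_prod_sq_mem hN M (by omega)) hv
  have hdeg (M : List (List (Fin n))) (v : List (Fin n))
      (hv : (M.map List.length).sum + v.length ≤ d) :
      ncDeg (ncMonomial v (M.map sigWordL).prod) ≤ d :=
    (ncDeg_ncMonomial_le _ _).trans (by have := sDeg_prod_sigWordL_le M; omega)
  have h₂' : (L₂.map List.length).sum + suf.reverse.length ≤ d := by simpa using h₂
  have hmono : MvPolynomial.monomial mm 1 = sig (ncMonomial pre (L₁.map sigWordL).prod
      * ncStar (ncMonomial suf.reverse (L₂.map sigWordL).prod)) := by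
    rw [ncStar_ncMonomial, List.reverse_reverse, ncMonomial_mul_ncMonomial, sig_ncMonomial,
      ← hprod, hsplit]
  rw [hmono]
  exact sig_mul_ncStar_mem_orderBounded (hdeg _ _ h₁) (hdeg _ _ h₂') (hbound _ _ h₁)
    (hbound _ _ h₂')

theorem SumSqBound.SPolyLe_le_orderBounded (hB : SumSqBound C d N) (hN : 0 ≤ N) :
    SPolyLe n (2 * d) ≤ (truncQM C d).orderBounded 1 := by
  intro p hp
  rw [p.as_sum]
  refine Submodule.sum_mem _ fun mm hmm => ?_
  rw [← mul_one (MvPolynomial.coeff mm p), ← smul_eq_mul, ← MvPolynomial.smul_monomial]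
  exact Submodule.smul_mem _ _ (hB.monomial_mem_orderBounded hN ((Finset.le_sup hmm).trans hp))

/-! ### Duality in `𝒮_{2d}` -/

lemma lext_coe {k : ℕ} (L : SPolyLe n k →ₗ[ℝ] ℝ) (x : SPolyLe n k) : lext L x = L x :=
  dif_pos x.2

lemma inDualCone_iff {L : SPolyLe n (2 * d) →ₗ[ℝ] ℝ} :
    InDualCone d C L ↔ ∀ x ∈ (truncQM C d).comap (SPolyLe n (2 * d)).subtype, 0 ≤ L x := by
  constructor
  · rintro hL x ⟨K, f, c, hc, hdeg, hx⟩
    have hx' : x = ∑ i, (⟨sig (f i * c i * ncStar (f i)), (sDeg_sig_le _).trans (hdeg i)⟩ :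
        SPolyLe n (2 * d)) := Subtype.ext (by simpa using hx)
    rw [hx', map_sum]
    exact Finset.sum_nonneg fun i _ =>
      (hL (f i) (c i) (hc i) (hdeg i)).trans_eq (lext_coe L ⟨_, _⟩)
  · intro hL f c hc hdeg
    have hs : sDeg (sig (f * c * ncStar f)) ≤ 2 * d := (sDeg_sig_le _).trans hdeg
    rw [lext, dif_pos hs]
    exact hL ⟨_, hs⟩ (sig_mem_truncQM hc hdeg)

theorem statement_15_general (n d : ℕ) (C : Set (NCSPoly n))
    (hsb : StrongBounded C)
    (a : SPoly n) (ha : sDeg a ≤ 2 * d)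
    (hbdd : BddAbove {m : ℝ | a - MvPolynomial.C m ∈ MCd C d}) :
    ∃ L : SPolyLe n (2 * d) →ₗ[ℝ] ℝ, InDualCone d C L ∧ lext L 1 = 1 ∧
      lext L a = sSup {m : ℝ | a - MvPolynomial.C m ∈ MCd C d} ∧
      ∀ L' : SPolyLe n (2 * d) →ₗ[ℝ] ℝ, InDualCone d C L' → lext L' 1 = 1 →
        sSup {m : ℝ | a - MvPolynomial.C m ∈ MCd C d} ≤ lext L' a := by
  obtain ⟨N, hN, hB⟩ := hsb.exists_sumSqBound
  set K := (truncQM C d).comap (SPolyLe n (2 * d)).subtype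
  set e : SPolyLe n (2 * d) := ⟨1, one_mem_SPolyLe _⟩
  have hS : {m : ℝ | a - MvPolynomial.C m ∈ MCd C d} = {m : ℝ | ⟨a, ha⟩ - m • e ∈ K} := by
    simp only [MvPolynomial.C_eq_smul_one]
    rfl
  have he (y : SPolyLe n (2 * d)) : ∃ c : ℝ, c • e + y ∈ K := by
    obtain ⟨c, hc, -⟩ := (hB d).SPolyLe_le_orderBounded hN.le y.2
    exact ⟨c, hc⟩
  rw [hS] at hbdd ⊢
  obtain ⟨L, hLK, hLe, hLa⟩ := K.exists_nonneg_eq_sSup he hbdd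
  refine ⟨L, inDualCone_iff.2 hLK, (lext_coe L e).trans hLe, (lext_coe L ⟨a, ha⟩).trans hLa,
    fun L' hL' hL'e => ?_⟩
  rw [lext_coe L' ⟨a, ha⟩]
  exact K.sSup_le_of_forall_nonneg (K.nonempty_of_forall_exists_smul_add_mem he)
    (inDualCone_iff.1 hL') ((lext_coe L' e).symm.trans hL'e)

/-- Proposition `p:nogap`, strong duality.
Let `C ⊆ 𝐒` be balanced with the strengthened boundedness hypothesis, let `a ∈ 𝒮_{2d}`,
and suppose `a_{min,d} = sup{m : a − m ∈ M(C)_d}` is finite (the set is nonempty and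
bounded above).  Then there is `L ∈ (M(C)_d)^∨` with `L(1) = 1` and `L(a) = a_{min,d}`,
and moreover `a_{min,d} ≤ L'(a)` for every `L' ∈ (M(C)_d)^∨` with `L'(1) = 1`; that is,
`inf{L(a) : L ∈ (M(C)_d)^∨, L(1) = 1} = a_{min,d}` and the infimum is attained. -/
theorem statement_15 (n d : ℕ) (hn : 1 ≤ n) (C : Set (NCSPoly n))
    (hbal : Balanced C) (hsb : StrongBounded C)
    (a : SPoly n) (ha : sDeg a ≤ 2 * d)
    (hne : {m : ℝ | a - MvPolynomial.C m ∈ MCd C d}.Nonempty)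
    (hbdd : BddAbove {m : ℝ | a - MvPolynomial.C m ∈ MCd C d}) :
    ∃ L : SPolyLe n (2 * d) →ₗ[ℝ] ℝ, InDualCone d C L ∧ lext L 1 = 1 ∧
      lext L a = sSup {m : ℝ | a - MvPolynomial.C m ∈ MCd C d} ∧
      ∀ L' : SPolyLe n (2 * d) →ₗ[ℝ] ℝ, InDualCone d C L' → lext L' 1 = 1 →
        sSup {m : ℝ | a - MvPolynomial.C m ∈ MCd C d} ≤ lext L' a :=
  statement_15_general n d C hsb a ha hbdd

end StatePoly
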